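/- (Strong consistency) Let β : ℕ → (0,∞) with β(n) → ∞, and define the set of quasi-minimizers χ̄_n^β := {x ∈ D_I^δ : V_n(x) < inf_{D_I^δ} V_n + 1/β(n)}. Then for every open neighborhood N of χ̄ := argmin_{D_I^δ} V, almost surely there exists n₀ such that χ̄_n^β ⊆ N for all n ≥ n₀. -/

import Mathlib

/-!
Write `gfun x ω = ∑ⱼ Λ (i ω) j * ‖x j - ω‖²`, where `i ω` is the Voronoi index of `ω`, so that
`V = ∫ gfun / 2` and `V_n` is the empirical mean of `gfun / 2`. Moving every centre of a
`δ`-separated configuration by at most `r` changes `gfun x ω` by `O(r)` unless some two centres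
are within `2 r` of a tie at `ω`; since `P` has a density it does not charge perpendicular
bisectors, so this tie zone has small probability. Hence every configuration has a neighbourhood
on which the increments of `gfun` are dominated by an envelope of small mean. This makes `V`
continuous, and together with the compactness of `D_I^δ` and the strong law at finitely many
centres and envelopes it gives `sup_D |V_n - V| → 0` almost surely. Once `|V_n - V| < ε` on `D`
and `1 / β n < ε`, every quasi-minimizer has `V`-value below `min V + 3 ε`, whereas on the compact
set `D \ N` the function `V` stays a positive gap above its minimum.
-/

open MeasureTheory Finset

noncomputable section

abbrev Eu (d : ℕ) := EuclideanSpace ℝ (Fin d)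

def cube (d : ℕ) : Set (Eu d) := {ω | ∀ i, ω i ∈ Set.Icc (0:ℝ) 1}

def vIndex {d : ℕ} {ι : Type*} [Fintype ι] [LinearOrder ι] [Nonempty ι]
    (x : ι → Eu d) (ω : Eu d) : ι :=
  (Finset.univ.filter fun i => ∀ j, dist (x i) ω ≤ dist (x j) ω).min' (by
    obtain ⟨i, -, hi⟩ := Finset.exists_min_image Finset.univ
      (fun j => dist (x j) ω) ⟨Classical.arbitrary ι, Finset.mem_univ _⟩
    exact ⟨i, Finset.mem_filter.2 ⟨Finset.mem_univ _,
      fun j => hi j (Finset.mem_univ _)⟩⟩)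

def vCell {d : ℕ} {ι : Type*} [Fintype ι] [LinearOrder ι] [Nonempty ι]
    (x : ι → Eu d) (i : ι) : Set (Eu d) :=
  {ω ∈ cube d | vIndex x ω = i}

def sep {d : ℕ} {ι : Type*} (δ : ℝ) : Set (ι → Eu d) :=
  {x | (∀ i, x i ∈ cube d) ∧ ∀ i j, i ≠ j → δ ≤ dist (x i) (x j)}

def gfun {d : ℕ} {ι : Type*} [Fintype ι] [LinearOrder ι] [Nonempty ι]
    (Λ : ι → ι → ℝ) (x : ι → Eu d) (ω : Eu d) : ℝ :=
  ∑ j, Λ (vIndex x ω) j * ‖x j - ω‖ ^ 2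

def extVar {d : ℕ} {ι : Type*} [Fintype ι] [LinearOrder ι] [Nonempty ι]
    (Λ : ι → ι → ℝ) (P : Measure (Eu d)) (x : ι → Eu d) : ℝ :=
  (1/2) * ∑ i, ∑ j, Λ i j * ∫ ω in vCell x i, ‖x j - ω‖ ^ 2 ∂P

open ProbabilityTheory Filter

/-- Empirical extended variance based on the first `n` samples. -/
def empVar {d : ℕ} {ι : Type*} [Fintype ι] [LinearOrder ι] [Nonempty ι]
    (Λ : ι → ι → ℝ) {Ω : Type*} (X : ℕ → Ω → Eu d) (n : ℕ) (ϖ : Ω)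
    (x : ι → Eu d) : ℝ :=
  (1 / (2 * n : ℝ)) * ∑ k ∈ Finset.range n, gfun Λ x (X k ϖ)

open Topology

section QuasiMinimizers

variable {α : Type*} [TopologicalSpace α]

theorem eventually_quasiMinimizers_subset {K N : Set α} (hK : IsCompact K) (hN : IsOpen N)
    {g : α → ℝ} (hg : ContinuousOn g K) (hgN : {x ∈ K | ∀ y ∈ K, g x ≤ g y} ⊆ N)
    {f : ℕ → α → ℝ} (hf : TendstoUniformlyOn f g atTop K)
    {η : ℕ → ℝ} (hη : Tendsto η atTop (𝓝 0)) :
    ∀ᶠ n in atTop, {x ∈ K | f n x < (⨅ y : K, f n y) + η n} ⊆ N := by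
  rcases (K \ N).eq_empty_or_nonempty with hKN | hKN
  · exact .of_forall fun n x hx => by_contra fun hxN => hKN.subset ⟨hx.1, hxN⟩
  obtain ⟨x₀, hx₀, hmin₀⟩ := (hK.diff hN).exists_isMinOn hKN (hg.mono Set.sdiff_subset)
  obtain ⟨xs, hxs, hmin⟩ := hK.exists_isMinOn (hKN.mono Set.sdiff_subset) hg
  have hgap : g xs < g x₀ := (hmin hx₀.1).lt_of_ne fun heq =>
    hx₀.2 (hgN ⟨hx₀.1, fun y hy => heq ▸ hmin hy⟩)
  obtain ⟨ε, hε, hεgap⟩ : ∃ ε > 0, g xs + 4 * ε = g x₀ :=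
    ⟨(g x₀ - g xs) / 4, by linarith, by ring⟩
  filter_upwards [Metric.tendstoUniformlyOn_iff.1 hf ε hε, hη.eventually (gt_mem_nhds hε)]
    with n hfn hηn x ⟨hxK, hx⟩
  have hclose : ∀ y ∈ K, |f n y - g y| < ε := fun y hy => by
    rw [abs_sub_comm, ← Real.dist_eq]; exact hfn y hy
  have hbdd : BddBelow (Set.range fun y : K => f n y) := by
    refine ⟨g xs - ε, ?_⟩
    rintro _ ⟨y, rfl⟩
    show g xs - ε ≤ f n y
    linarith [isMinOn_iff.1 hmin y y.2, (abs_lt.1 (hclose y y.2)).1]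
  have hinf : (⨅ y : K, f n y) ≤ f n xs := ciInf_le hbdd ⟨xs, hxs⟩
  by_contra hxN
  have hx₀x : g x₀ ≤ g x := hmin₀ ⟨hxK, hxN⟩
  linarith [abs_lt.1 (hclose x hxK), abs_lt.1 (hclose xs hxs)]

end QuasiMinimizers

section EmpiricalMeans

variable {E : Type*}

def empiricalMean (s : ℕ → E) (f : E → ℝ) (n : ℕ) : ℝ :=
  (∑ k ∈ range n, f (s k)) / n

theorem abs_empiricalMean_sub_le {s : ℕ → E} {f g h : E → ℝ}
    (hfg : ∀ k, |f (s k) - g (s k)| ≤ h (s k)) (n : ℕ) :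
    |empiricalMean s f n - empiricalMean s g n| ≤ empiricalMean s h n := by
  rw [empiricalMean, empiricalMean, empiricalMean, ← sub_div, ← Finset.sum_sub_distrib, abs_div,
    Nat.abs_cast]
  gcongr
  exact (Finset.abs_sum_le_sum_abs _ _).trans (Finset.sum_le_sum fun k _ => hfg k)

variable [MeasurableSpace E] {Ω : Type*} [MeasurableSpace Ω] {μ : Measure Ω} {P : Measure E}
  {X : ℕ → Ω → E}

theorem ae_tendsto_empiricalMean (hX : ∀ n, AEMeasurable (X n) μ) (hindep : iIndepFun X μ)
    (hlaw : ∀ n, μ.map (X n) = P) {f : E → ℝ} (hf : Measurable f) (hfi : Integrable f P) :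
    ∀ᵐ ϖ ∂μ, Tendsto (empiricalMean (X · ϖ) f) atTop (𝓝 (∫ ω, f ω ∂P)) := by
  have hident : ∀ n, IdentDistrib (f ∘ X n) (f ∘ X 0) μ μ := fun n =>
    (IdentDistrib.mk (hX n) (hX 0) (by rw [hlaw, hlaw])).comp hf
  have hint : Integrable (f ∘ X 0) μ :=
    (integrable_map_measure (by rw [hlaw]; exact hf.aestronglyMeasurable) (hX 0)).1
      (by rw [hlaw]; exact hfi)
  have hmean : ∫ ϖ, (f ∘ X 0) ϖ ∂μ = ∫ ω, f ω ∂P := by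
    rw [← hlaw 0, integral_map (hX 0) (by rw [hlaw]; exact hf.aestronglyMeasurable)]; rfl
  filter_upwards [strong_law_ae_real (fun n => f ∘ X n) hint
    (fun i j hij => (hindep.indepFun hij).comp hf hf) hident] with ϖ hϖ
  rwa [hmean] at hϖ

end EmpiricalMeans

section LocalEnvelopes

variable {α E : Type*} [TopologicalSpace α] [MeasurableSpace E]

def LocallyEnveloped (P : Measure E) (F : α → E → ℝ) (K : Set α) : Prop :=
  ∀ z ∈ K, ∀ ε > 0, ∃ U ∈ 𝓝 z, ∃ h : E → ℝ, Measurable h ∧ Integrable h P ∧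
    ∫ ω, h ω ∂P < ε ∧ ∀ᵐ ω ∂P, ∀ x ∈ U ∩ K, |F x ω - F z ω| ≤ h ω

theorem abs_integral_sub_le_of_ae_abs_sub_le {P : Measure E} {f g h : E → ℝ}
    (hf : Integrable f P) (hg : Integrable g P) (hh : Integrable h P)
    (hle : ∀ᵐ ω ∂P, |f ω - g ω| ≤ h ω) :
    |∫ ω, f ω ∂P - ∫ ω, g ω ∂P| ≤ ∫ ω, h ω ∂P := by
  rw [← integral_sub hf hg]
  exact abs_integral_le_integral_abs.trans (integral_mono_ae (hf.sub hg).abs hh hle)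

variable {P : Measure E} {F : α → E → ℝ} {K : Set α}

theorem LocallyEnveloped.continuousOn_integral (hF : LocallyEnveloped P F K)
    (hFi : ∀ x ∈ K, Integrable (F x) P) : ContinuousOn (fun x => ∫ ω, F x ω ∂P) K := by
  refine fun z hz => Metric.tendsto_nhds.2 fun ε hε => ?_
  obtain ⟨U, hU, h, -, hhi, hhε, hle⟩ := hF z hz ε hε
  filter_upwards [inter_mem_nhdsWithin K hU] with x hx
  rw [Real.dist_eq]
  exact (abs_integral_sub_le_of_ae_abs_sub_le (hFi x hx.1) (hFi z hz) hhi
    (hle.mono fun ω hω => hω x ⟨hx.2, hx.1⟩)).trans_lt hhε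

theorem abs_empiricalMean_sub_integral_le {s : ℕ → E} {f g h : E → ℝ}
    (hf : Integrable f P) (hg : Integrable g P) (hh : Integrable h P)
    (hs : ∀ k, |f (s k) - g (s k)| ≤ h (s k)) (hP : ∀ᵐ ω ∂P, |f ω - g ω| ≤ h ω) (n : ℕ) :
    |empiricalMean s f n - ∫ ω, f ω ∂P| ≤
      empiricalMean s h n + |empiricalMean s g n - ∫ ω, g ω ∂P| + ∫ ω, h ω ∂P := by
  have hmean := abs_empiricalMean_sub_le hs n
  have hint := abs_integral_sub_le_of_ae_abs_sub_le hf hg hh hP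
  calc |empiricalMean s f n - ∫ ω, f ω ∂P|
      ≤ |empiricalMean s f n - empiricalMean s g n|
        + |empiricalMean s g n - ∫ ω, g ω ∂P| + |∫ ω, g ω ∂P - ∫ ω, f ω ∂P| :=
        (abs_sub_le _ _ _).trans (add_le_add_left (abs_sub_le _ _ _) _)
    _ ≤ _ := by rw [abs_sub_comm (∫ ω, g ω ∂P)]; linarith

variable {Ω : Type*} [MeasurableSpace Ω] {μ : Measure Ω} {X : ℕ → Ω → E}

theorem LocallyEnveloped.ae_eventually_abs_empiricalMean_sub_lt (hF : LocallyEnveloped P F K)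
    (hK : IsCompact K) (hFm : ∀ x ∈ K, Measurable (F x)) (hFi : ∀ x ∈ K, Integrable (F x) P)
    (hX : ∀ n, AEMeasurable (X n) μ) (hindep : iIndepFun X μ) (hlaw : ∀ n, μ.map (X n) = P)
    {ε : ℝ} (hε : 0 < ε) :
    ∀ᵐ ϖ ∂μ, ∀ᶠ n in atTop, ∀ x ∈ K,
      |empiricalMean (X · ϖ) (F x) n - ∫ ω, F x ω ∂P| < ε := by
  choose! U hU h hhm hhi hhε hle using fun z hz => hF z hz (ε / 3) (by positivity)
  obtain ⟨t, htK, hKt⟩ := hK.elim_nhds_subcover U hU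
  have hsamples : ∀ᵐ ϖ ∂μ, ∀ z ∈ t,
      Tendsto (empiricalMean (X · ϖ) (F z)) atTop (𝓝 (∫ ω, F z ω ∂P)) ∧
      Tendsto (empiricalMean (X · ϖ) (h z)) atTop (𝓝 (∫ ω, h z ω ∂P)) ∧
      ∀ k, ∀ x ∈ U z ∩ K, |F x (X k ϖ) - F z (X k ϖ)| ≤ h z (X k ϖ) := by
    refine (eventually_all_finset t).2 fun z hz => ?_
    have hzK := htK z hz
    filter_upwards [ae_tendsto_empiricalMean hX hindep hlaw (hFm z hzK) (hFi z hzK),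
      ae_tendsto_empiricalMean hX hindep hlaw (hhm z hzK) (hhi z hzK),
      ae_all_iff.2 fun k => ae_of_ae_map (hX k) ((hlaw k).symm ▸ hle z hzK)]
      with ϖ hFz hhz hlez
    exact ⟨hFz, hhz, hlez⟩
  filter_upwards [hsamples] with ϖ hϖ
  have hnear : ∀ z ∈ t, ∀ᶠ n in atTop,
      |empiricalMean (X · ϖ) (F z) n - ∫ ω, F z ω ∂P| < ε / 3 ∧
      empiricalMean (X · ϖ) (h z) n < ε / 3 := fun z hz =>
    ((hϖ z hz).1.eventually (Metric.ball_mem_nhds _ (by positivity))).and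
      ((hϖ z hz).2.1.eventually_lt_const (hhε z (htK z hz)))
  filter_upwards [(eventually_all_finset t).2 hnear] with n hn x hx
  obtain ⟨z, hz, hxz⟩ := Set.mem_iUnion₂.1 (hKt hx)
  have hzK := htK z hz
  have hFz : |empiricalMean (X · ϖ) (F z) n - ∫ ω, F z ω ∂P| < ε / 3 := by
    simpa only [Metric.mem_ball, Real.dist_eq] using (hn z hz).1
  refine (abs_empiricalMean_sub_integral_le (hFi x hx) (hFi z hzK) (hhi z hzK)
    (fun k => (hϖ z hz).2.2 k x ⟨hxz, hx⟩) ((hle z hzK).mono fun ω hω => hω x ⟨hxz, hx⟩)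
    n).trans_lt ?_
  linarith [(hn z hz).2, hhε z hzK]

theorem LocallyEnveloped.ae_tendstoUniformlyOn_empiricalMean (hF : LocallyEnveloped P F K)
    (hK : IsCompact K) (hFm : ∀ x ∈ K, Measurable (F x)) (hFi : ∀ x ∈ K, Integrable (F x) P)
    (hX : ∀ n, AEMeasurable (X n) μ) (hindep : iIndepFun X μ) (hlaw : ∀ n, μ.map (X n) = P) :
    ∀ᵐ ϖ ∂μ, TendstoUniformlyOn (fun n x => empiricalMean (X · ϖ) (F x) n)
      (fun x => ∫ ω, F x ω ∂P) atTop K := by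
  filter_upwards [ae_all_iff.2 fun k : ℕ => hF.ae_eventually_abs_empiricalMean_sub_lt hK hFm hFi
    hX hindep hlaw (Nat.one_div_pos_of_nat (n := k))] with ϖ hϖ
  refine Metric.tendstoUniformlyOn_iff.2 fun ε hε => ?_
  obtain ⟨k, hk⟩ := exists_nat_one_div_lt hε
  filter_upwards [hϖ k] with n hn x hx
  rw [dist_comm, Real.dist_eq]
  exact (hn x hx).trans hk

end LocalEnvelopes

section Cube

variable {d : ℕ}

theorem isClosed_cube : IsClosed (cube d) := by
  simp only [cube, Set.ofPred_forall]
  exact isClosed_iInter fun i => isClosed_Icc.preimage (by fun_prop)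

theorem norm_sub_le_sqrt_of_mem_cube {a b : Eu d} (ha : a ∈ cube d) (hb : b ∈ cube d) :
    ‖a - b‖ ≤ √d := by
  rw [EuclideanSpace.norm_eq]
  refine Real.sqrt_le_sqrt ((Finset.sum_le_sum fun i _ => ?_).trans_eq
    (show ∑ _i : Fin d, (1 : ℝ) = d by simp))
  rw [PiLp.sub_apply, Real.norm_eq_abs, sq_abs]
  nlinarith [(ha i).1, (ha i).2, (hb i).1, (hb i).2]

theorem sq_norm_sub_le_of_mem_cube {a b : Eu d} (ha : a ∈ cube d) (hb : b ∈ cube d) :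
    ‖a - b‖ ^ 2 ≤ d := by
  calc ‖a - b‖ ^ 2 ≤ √(d : ℝ) ^ 2 := by gcongr; exact norm_sub_le_sqrt_of_mem_cube ha hb
    _ = (d : ℝ) := Real.sq_sqrt d.cast_nonneg

theorem isCompact_cube : IsCompact (cube d) := by
  refine Metric.isCompact_of_isClosed_isBounded isClosed_cube
    (isBounded_iff_forall_norm_le.2 ⟨√d, fun ω hω => ?_⟩)
  simpa using norm_sub_le_sqrt_of_mem_cube hω (b := 0) (by simp [cube])

end Cube

section Voronoi

variable {d : ℕ} {ι : Type*} [Fintype ι] [LinearOrder ι] [Nonempty ι]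

theorem dist_vIndex_le (x : ι → Eu d) (ω : Eu d) (j : ι) :
    dist (x (vIndex x ω)) ω ≤ dist (x j) ω :=
  (Finset.mem_filter.1 (Finset.min'_mem (Finset.univ.filter fun i =>
    ∀ j, dist (x i) ω ≤ dist (x j) ω) _)).2 j

theorem vIndex_le {x : ι → Eu d} {ω : Eu d} {i : ι} (hi : ∀ j, dist (x i) ω ≤ dist (x j) ω) :
    vIndex x ω ≤ i :=
  Finset.min'_le _ _ (Finset.mem_filter.2 ⟨Finset.mem_univ _, hi⟩)

theorem vIndex_eq_iff {x : ι → Eu d} {ω : Eu d} {i : ι} :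
    vIndex x ω = i ↔ (∀ j, dist (x i) ω ≤ dist (x j) ω) ∧
      ∀ i' < i, ∃ j, dist (x j) ω < dist (x i') ω := by
  constructor
  · rintro rfl
    refine ⟨dist_vIndex_le x ω, fun i' hi' => ?_⟩
    by_contra! h
    exact (vIndex_le h).not_gt hi'
  · rintro ⟨hi, hlt⟩
    refine le_antisymm (vIndex_le hi) (not_lt.1 fun h => ?_)
    obtain ⟨j, hj⟩ := hlt _ h
    exact (dist_vIndex_le x ω j).not_gt hj

theorem vIndex_eq_of_forall_dist_lt {x : ι → Eu d} {ω : Eu d} {i : ι}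
    (hi : ∀ j ≠ i, dist (x i) ω < dist (x j) ω) : vIndex x ω = i :=
  by_contra fun h => (dist_vIndex_le x ω i).not_gt (hi _ h)

theorem measurableSet_vIndex_eq (x : ι → Eu d) (i : ι) :
    MeasurableSet {ω | vIndex x ω = i} := by
  simp only [vIndex_eq_iff, Set.ofPred_and, Set.ofPred_forall, Set.ofPred_exists]
  refine .inter (.iInter fun j => measurableSet_le (by fun_prop) (by fun_prop))
    (.iInter fun i' => .iInter fun _ => .iUnion fun j =>
      measurableSet_lt (by fun_prop) (by fun_prop))

end Voronoi

section TieZone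

variable {d : ℕ} {ι : Type*}

def tieZone (x : ι → Eu d) (t : ℝ) : Set (Eu d) :=
  {ω | ∃ i j, i ≠ j ∧ |dist (x i) ω - dist (x j) ω| ≤ t}

theorem tieZone_mono (x : ι → Eu d) {t t' : ℝ} (h : t ≤ t') : tieZone x t ⊆ tieZone x t' :=
  fun _ ⟨i, j, hij, hle⟩ => ⟨i, j, hij, hle.trans h⟩

theorem measurableSet_tieZone [Countable ι] (x : ι → Eu d) (t : ℝ) :
    MeasurableSet (tieZone x t) := by
  simp only [tieZone, Set.ofPred_exists, Set.ofPred_and]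
  exact .iUnion fun i => .iUnion fun j =>
    (MeasurableSet.const _).inter (measurableSet_le (by fun_prop) measurable_const)

theorem biInter_tieZone_subset [Finite ι] (x : ι → Eu d) :
    ⋂ t > 0, tieZone x t ⊆ tieZone x 0 := by
  intro ω hω
  by_contra h
  simp only [tieZone, Set.mem_ofPred_eq, not_exists, not_and, not_le] at h
  have hev : ∀ᶠ t in 𝓝[>] (0 : ℝ), ∀ i j, i ≠ j → t < |dist (x i) ω - dist (x j) ω| :=
    eventually_all.2 fun i => eventually_all.2 fun j =>
      eventually_imp_distrib_left.2 fun hij => nhdsWithin_le_nhds (gt_mem_nhds (h i j hij))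
  obtain ⟨t, hlt, ht⟩ := (hev.and self_mem_nhdsWithin).exists
  obtain ⟨i, j, hij, hle⟩ := Set.mem_iInter₂.1 hω t ht
  exact (hle.trans_lt (hlt i j hij)).false

theorem measure_tieZone_zero [Countable ι] {P : Measure (Eu d)} (hP : P ≪ volume) {x : ι → Eu d}
    (hx : Function.Injective x) : P (tieZone x 0) = 0 := by
  refine measure_mono_null (t := ⋃ i, ⋃ j, ⋃ (_ : i ≠ j), AffineSubspace.perpBisector (x i) (x j))
    (fun ω ⟨i, j, hij, hle⟩ => Set.mem_iUnion₂.2 ⟨i, j, Set.mem_iUnion.2 ⟨hij,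
      AffineSubspace.mem_perpBisector_iff_dist_eq'.2 (sub_eq_zero.1 (abs_nonpos_iff.1 hle))⟩⟩) ?_
  refine measure_iUnion_null fun i => measure_iUnion_null fun j => measure_iUnion_null fun hij =>
    hP (Measure.addHaar_affineSubspace volume _ ?_)
  exact mt AffineSubspace.perpBisector_eq_top.1 (hx.ne hij)

theorem exists_measureReal_tieZone_lt [Finite ι] {P : Measure (Eu d)} [IsFiniteMeasure P]
    (hP : P ≪ volume) {x : ι → Eu d} (hx : Function.Injective x) {ε : ℝ} (hε : 0 < ε) :
    ∃ t > 0, P.real (tieZone x t) < ε := by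
  have hlim := tendsto_measure_biInter_gt (μ := P) (a := (0 : ℝ))
    (fun t _ => (measurableSet_tieZone x t).nullMeasurableSet)
    (fun _ _ _ h => tieZone_mono x h) ⟨1, one_pos, measure_ne_top P _⟩
  rw [measure_mono_null (biInter_tieZone_subset x) (measure_tieZone_zero hP hx)] at hlim
  obtain ⟨t, hPt, ht⟩ := ((hlim.eventually (gt_mem_nhds (ENNReal.ofReal_pos.2 hε))).and
    self_mem_nhdsWithin).exists
  exact ⟨t, ht, ENNReal.toReal_lt_of_lt_ofReal hPt⟩

variable [Fintype ι] [LinearOrder ι] [Nonempty ι]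

theorem vIndex_eq_of_notMem_tieZone {x y : ι → Eu d} {ω : Eu d} {r : ℝ}
    (hxy : ∀ i, dist (x i) (y i) ≤ r) (hω : ω ∉ tieZone x (2 * r)) :
    vIndex y ω = vIndex x ω := by
  refine vIndex_eq_of_forall_dist_lt fun j hj => ?_
  have hgap : 2 * r < dist (x j) ω - dist (x (vIndex x ω)) ω := by
    have := dist_vIndex_le x ω j
    by_contra! h
    exact hω ⟨_, j, hj.symm, abs_le.2 ⟨by linarith, by linarith⟩⟩
  linarith [dist_triangle_left (y (vIndex x ω)) ω (x (vIndex x ω)),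
    dist_triangle_left (x j) ω (y j), hxy (vIndex x ω), hxy j, dist_comm (x j) (y j)]

end TieZone

section Gfun

variable {d : ℕ} {ι : Type*} [Fintype ι] [LinearOrder ι] [Nonempty ι] {Λ : ι → ι → ℝ}

theorem gfun_eq_sum_indicator (Λ : ι → ι → ℝ) (x : ι → Eu d) :
    gfun Λ x = fun ω => ∑ i, {ω | vIndex x ω = i}.indicator
      (fun ω => ∑ j, Λ i j * ‖x j - ω‖ ^ 2) ω := by
  ext ω
  symm
  rw [Finset.sum_eq_single_of_mem (vIndex x ω) (Finset.mem_univ _)]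
  · rw [Set.indicator_of_mem (show ω ∈ {ω' | vIndex x ω' = vIndex x ω} from rfl), gfun]
  · exact fun i _ hi => Set.indicator_of_notMem (s := {ω | vIndex x ω = i}) (Ne.symm hi) _

theorem measurable_gfun (Λ : ι → ι → ℝ) (x : ι → Eu d) : Measurable (gfun Λ x) := by
  rw [gfun_eq_sum_indicator]
  exact Finset.measurable_sum _ fun i _ =>
    (Measurable.indicator (by fun_prop) (measurableSet_vIndex_eq x i))

theorem gfun_mem_Icc (hΛ : ∀ i j, Λ i j ∈ Set.Icc (0 : ℝ) 1) {x : ι → Eu d}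
    (hx : ∀ i, x i ∈ cube d) {ω : Eu d} (hω : ω ∈ cube d) :
    gfun Λ x ω ∈ Set.Icc (0 : ℝ) (Fintype.card ι * d) := by
  refine ⟨Finset.sum_nonneg fun j _ => mul_nonneg (hΛ _ j).1 (sq_nonneg _), ?_⟩
  calc gfun Λ x ω ≤ ∑ _j : ι, (d : ℝ) := Finset.sum_le_sum fun j _ =>
        (mul_le_of_le_one_left (sq_nonneg _) (hΛ _ j).2).trans
          (sq_norm_sub_le_of_mem_cube (hx j) hω)
    _ = Fintype.card ι * d := by simp

theorem abs_sq_norm_sub_sub_sq_norm_sub_le {a b ω : Eu d} (ha : a ∈ cube d) (hb : b ∈ cube d)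
    (hω : ω ∈ cube d) {r : ℝ} (hab : dist a b ≤ r) :
    |‖b - ω‖ ^ 2 - ‖a - ω‖ ^ 2| ≤ 2 * √d * r := by
  have hdiff : |‖b - ω‖ - ‖a - ω‖| ≤ r := by
    refine (abs_norm_sub_norm_le _ _).trans ?_
    rwa [sub_sub_sub_cancel_right, ← dist_eq_norm, dist_comm]
  rw [sq_sub_sq, abs_mul, abs_of_nonneg (by positivity)]
  exact mul_le_mul (by linarith [norm_sub_le_sqrt_of_mem_cube ha hω,
    norm_sub_le_sqrt_of_mem_cube hb hω]) hdiff (abs_nonneg _) (by positivity)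

theorem abs_gfun_sub_le_of_notMem_tieZone (hΛ : ∀ i j, Λ i j ∈ Set.Icc (0 : ℝ) 1)
    {x y : ι → Eu d} (hx : ∀ i, x i ∈ cube d) (hy : ∀ i, y i ∈ cube d) {ω : Eu d}
    (hω : ω ∈ cube d) {r : ℝ} (hxy : ∀ i, dist (x i) (y i) ≤ r)
    (hT : ω ∉ tieZone x (2 * r)) :
    |gfun Λ y ω - gfun Λ x ω| ≤ Fintype.card ι * (2 * √d) * r := by
  rw [gfun, gfun, vIndex_eq_of_notMem_tieZone hxy hT, ← Finset.sum_sub_distrib]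
  calc |∑ j, (Λ (vIndex x ω) j * ‖y j - ω‖ ^ 2 - Λ (vIndex x ω) j * ‖x j - ω‖ ^ 2)|
      ≤ ∑ _j : ι, 2 * √d * r := by
        refine (Finset.abs_sum_le_sum_abs _ _).trans (Finset.sum_le_sum fun j _ => ?_)
        rw [← mul_sub, abs_mul, abs_of_nonneg (hΛ _ j).1]
        exact (mul_le_of_le_one_left (abs_nonneg _) (hΛ _ j).2).trans
          (abs_sq_norm_sub_sub_sq_norm_sub_le (hx j) (hy j) hω (hxy j))
    _ = Fintype.card ι * (2 * √d) * r := by simp [mul_assoc]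

theorem abs_gfun_sub_le (hΛ : ∀ i j, Λ i j ∈ Set.Icc (0 : ℝ) 1)
    {x y : ι → Eu d} (hx : ∀ i, x i ∈ cube d) (hy : ∀ i, y i ∈ cube d) {ω : Eu d}
    (hω : ω ∈ cube d) {r : ℝ} (hr : 0 ≤ r) (hxy : ∀ i, dist (x i) (y i) ≤ r) :
    |gfun Λ y ω - gfun Λ x ω| ≤ Fintype.card ι * (2 * √d) * r +
      (tieZone x (2 * r)).indicator (fun _ => (Fintype.card ι * d : ℝ)) ω := by
  by_cases hT : ω ∈ tieZone x (2 * r)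
  · rw [Set.indicator_of_mem hT]
    have hy' := gfun_mem_Icc hΛ hy hω
    have hx' := gfun_mem_Icc hΛ hx hω
    have : 0 ≤ (Fintype.card ι : ℝ) * (2 * √d) * r := by positivity
    linarith [abs_sub_le_of_nonneg_of_le hy'.1 hy'.2 hx'.1 hx'.2]
  · rw [Set.indicator_of_notMem hT, add_zero]
    exact abs_gfun_sub_le_of_notMem_tieZone hΛ hx hy hω hxy hT

end Gfun

section ExtendedVariance

variable {d : ℕ} {ι : Type*} [Fintype ι] [LinearOrder ι] [Nonempty ι] {Λ : ι → ι → ℝ}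
  {P : Measure (Eu d)} [IsProbabilityMeasure P]

theorem ae_mem_cube (hPcube : P (cube d) = 1) : ∀ᵐ ω ∂P, ω ∈ cube d :=
  (ae_iff_measure_eq isClosed_cube.measurableSet.nullMeasurableSet).2 (by rwa [measure_univ])

theorem integrable_sq_norm_sub (hPcube : P (cube d) = 1) {a : Eu d} (ha : a ∈ cube d) :
    Integrable (fun ω => ‖a - ω‖ ^ 2) P :=
  .of_bound (by fun_prop) d ((ae_mem_cube hPcube).mono fun ω hω => by
    simpa using sq_norm_sub_le_of_mem_cube ha hω)

theorem integrable_gfun (hΛ : ∀ i j, Λ i j ∈ Set.Icc (0 : ℝ) 1) (hPcube : P (cube d) = 1)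
    {x : ι → Eu d} (hx : ∀ i, x i ∈ cube d) : Integrable (gfun Λ x) P :=
  .of_bound (measurable_gfun Λ x).aestronglyMeasurable _ ((ae_mem_cube hPcube).mono
    fun ω hω => by
      rw [Real.norm_eq_abs, abs_of_nonneg (gfun_mem_Icc hΛ hx hω).1]
      exact (gfun_mem_Icc hΛ hx hω).2)

theorem extVar_eq_integral (hPcube : P (cube d) = 1) {x : ι → Eu d} (hx : ∀ i, x i ∈ cube d) :
    extVar Λ P x = ∫ ω, gfun Λ x ω / 2 ∂P := by
  have hint : ∀ i, Integrable (fun ω => ∑ j, Λ i j * ‖x j - ω‖ ^ 2) P := fun i =>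
    integrable_finsetSum _ fun j _ => (integrable_sq_norm_sub hPcube (hx j)).const_mul _
  have hcell : ∀ i, {ω | vIndex x ω = i} =ᵐ[P] vCell x i := fun i => by
    filter_upwards [ae_mem_cube hPcube] with ω hω
    exact propext ⟨fun h => ⟨hω, h⟩, fun h => h.2⟩
  rw [integral_div, gfun_eq_sum_indicator, integral_finsetSum _ fun i _ =>
    (hint i).indicator (measurableSet_vIndex_eq x i), extVar, one_div, div_eq_inv_mul]
  congr 1
  refine Finset.sum_congr rfl fun i _ => ?_
  rw [integral_indicator (measurableSet_vIndex_eq x i), Measure.restrict_congr_set (hcell i),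
    integral_finsetSum _ fun j _ => ((integrable_sq_norm_sub hPcube (hx j)).const_mul _).restrict]
  exact Finset.sum_congr rfl fun j _ => (integral_const_mul _ _).symm

end ExtendedVariance

section Separated

variable {d : ℕ} {ι : Type*} {δ : ℝ}

theorem isCompact_sep [Finite ι] (δ : ℝ) : IsCompact (sep δ : Set (ι → Eu d)) := by
  have hsep : (sep δ : Set (ι → Eu d)) = Set.univ.pi (fun _ => cube d) ∩
      ⋂ i, ⋂ j, ⋂ (_ : i ≠ j), {x | δ ≤ dist (x i) (x j)} := by
    ext x; simp [sep, Set.mem_pi]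
  rw [hsep]
  exact (isCompact_univ_pi fun _ => isCompact_cube).inter_right
    (isClosed_iInter fun i => isClosed_iInter fun j => isClosed_iInter fun _ =>
      isClosed_le continuous_const (by fun_prop))

theorem injective_of_mem_sep (hδ : 0 < δ) {x : ι → Eu d} (hx : x ∈ sep δ) :
    Function.Injective x := fun i j hij => by_contra fun hne => by
  have := hx.2 i j hne
  rw [hij, dist_self] at this
  linarith

variable [Fintype ι] [LinearOrder ι] [Nonempty ι] {Λ : ι → ι → ℝ}
  {P : Measure (Eu d)} [IsProbabilityMeasure P]

theorem locallyEnveloped_gfun (hΛ : ∀ i j, Λ i j ∈ Set.Icc (0 : ℝ) 1)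
    (hPcube : P (cube d) = 1) (hP : P ≪ volume) (hδ : 0 < δ) :
    LocallyEnveloped P (fun x ω => gfun Λ x ω / 2) (sep δ) := by
  intro z hz ε hε
  set L : ℝ := Fintype.card ι * (2 * √d)
  set M : ℝ := Fintype.card ι * d
  obtain ⟨t, ht, hPt⟩ := exists_measureReal_tieZone_lt hP (injective_of_mem_sep hδ hz)
    (ε := ε / (2 * (M + 1))) (by positivity)
  -- `2 r ≤ t` keeps the tie zone inside the one of small probability, and `L r ≤ ε / 4`
  set r := min (t / 2) (ε / (4 * (L + 1)))
  have hr : 0 < r := lt_min (by positivity) (by positivity)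
  have hmeas := measurableSet_tieZone z (2 * r)
  refine ⟨Metric.ball z r, Metric.ball_mem_nhds z hr,
    fun ω => L * r + (tieZone z (2 * r)).indicator (fun _ => M) ω,
    measurable_const.add (measurable_const.indicator hmeas),
    (integrable_const _).add ((integrable_const _).indicator hmeas), ?_, ?_⟩
  · rw [integral_add (integrable_const _) ((integrable_const _).indicator hmeas),
      integral_const, integral_indicator_const _ hmeas, probReal_univ, one_smul, smul_eq_mul]
    have hPr : P.real (tieZone z (2 * r)) < ε / (2 * (M + 1)) :=
      (measureReal_mono (tieZone_mono z (by linarith [min_le_left (t / 2) (ε / (4 * (L + 1)))])))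
        |>.trans_lt hPt
    have hLr : L * r ≤ ε / 4 := by
      have := (le_div_iff₀ (by positivity)).1 (min_le_right (t / 2) (ε / (4 * (L + 1))))
      nlinarith
    have hMP := (lt_div_iff₀ (by positivity)).1 hPr
    nlinarith [measureReal_nonneg (μ := P) (s := tieZone z (2 * r))]
  · filter_upwards [ae_mem_cube hPcube] with ω hω x hx
    have hxz : ∀ i, dist (z i) (x i) ≤ r := fun i =>
      (dist_le_pi_dist z x i).trans (dist_comm z x ▸ (Metric.mem_ball.1 hx.1).le)
    have := abs_gfun_sub_le hΛ hz.1 hx.2.1 hω hr.le hxz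
    rw [← sub_div, abs_div, abs_two]
    linarith [abs_nonneg (gfun Λ x ω - gfun Λ z ω)]

end Separated

theorem empVar_eq_empiricalMean {d : ℕ} {ι : Type*} [Fintype ι] [LinearOrder ι] [Nonempty ι]
    (Λ : ι → ι → ℝ) {Ω : Type*} (X : ℕ → Ω → Eu d) (n : ℕ) (ϖ : Ω) (x : ι → Eu d) :
    empVar Λ X n ϖ x = empiricalMean (X · ϖ) (fun ω => gfun Λ x ω / 2) n := by
  rw [empVar, empiricalMean, ← Finset.sum_div, div_div, one_div_mul_eq_div, mul_comm]

theorem stmt15_general {d : ℕ} {ι : Type*} [Fintype ι] [LinearOrder ι] [Nonempty ι]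
    (Λ : ι → ι → ℝ) (hΛmem : ∀ i j, Λ i j ∈ Set.Icc (0:ℝ) 1)
    (δ B : ℝ) (hδ : 0 < δ)
    (P : Measure (Eu d)) [IsProbabilityMeasure P] (hPcube : P (cube d) = 1)
    (hPB : ∀ s : Set (Eu d), MeasurableSet s →
      P s ≤ ENNReal.ofReal B * volume s)
    {Ω : Type*} [MeasurableSpace Ω] (μ : Measure Ω)
    (X : ℕ → Ω → Eu d) (hmeas : ∀ n, Measurable (X n))
    (hindep : iIndepFun X μ)
    (hlaw : ∀ n, Measure.map (X n) μ = P)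
    (β : ℕ → ℝ) (hβ : Tendsto β atTop atTop)
    (N : Set (ι → Eu d)) (hN : IsOpen N)
    (hsub : {x ∈ (sep δ : Set (ι → Eu d)) |
        ∀ y ∈ (sep δ : Set (ι → Eu d)), extVar Λ P x ≤ extVar Λ P y} ⊆ N) :
    ∀ᵐ ϖ ∂μ, ∃ n₀ : ℕ, ∀ n ≥ n₀,
      {x ∈ (sep δ : Set (ι → Eu d)) |
        empVar Λ X n ϖ x <
          (⨅ y : (sep δ : Set (ι → Eu d)), empVar Λ X n ϖ y.1) + 1 / β n}
        ⊆ N := by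
  have hP : P ≪ volume := Measure.AbsolutelyContinuous.mk fun s hs hs0 =>
    nonpos_iff_eq_zero.1 ((hPB s hs).trans_eq (by rw [hs0, mul_zero]))
  have hF := locallyEnveloped_gfun hΛmem hPcube hP hδ
  have hFm : ∀ x ∈ (sep δ : Set (ι → Eu d)), Measurable fun ω => gfun Λ x ω / 2 := fun x _ =>
    (measurable_gfun Λ x).div_const 2
  have hFi : ∀ x ∈ (sep δ : Set (ι → Eu d)), Integrable (fun ω => gfun Λ x ω / 2) P := fun x hx =>
    (integrable_gfun hΛmem hPcube hx.1).div_const 2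
  have hV : Set.EqOn (fun x => ∫ ω, gfun Λ x ω / 2 ∂P) (extVar Λ P) (sep δ : Set (ι → Eu d)) :=
    fun x hx => (extVar_eq_integral hPcube hx.1).symm
  have hη : Tendsto (fun n => 1 / β n) atTop (𝓝 0) :=
    hβ.inv_tendsto_atTop.congr fun n => (one_div (β n)).symm
  filter_upwards [hF.ae_tendstoUniformlyOn_empiricalMean (isCompact_sep δ) hFm hFi
    (fun n => (hmeas n).aemeasurable) hindep hlaw] with ϖ hϖ
  simp only [← empVar_eq_empiricalMean] at hϖ
  exact eventually_atTop.1 (eventually_quasiMinimizers_subset (isCompact_sep δ) hN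
    ((hF.continuousOn_integral hFi).congr hV.symm) hsub (hϖ.congr_right hV) hη)

theorem stmt15 {d : ℕ} {ι : Type*} [Fintype ι] [LinearOrder ι] [Nonempty ι]
    (Λ : ι → ι → ℝ) (hΛmem : ∀ i j, Λ i j ∈ Set.Icc (0:ℝ) 1)
    (hΛsymm : ∀ i j, Λ i j = Λ j i) (hΛ0 : ∀ i, Λ i i = 1)
    (δ B : ℝ) (hδ : 0 < δ) (hB : 0 < B)
    (hne : (sep δ : Set (ι → Eu d)).Nonempty)
    (P : Measure (Eu d)) [IsProbabilityMeasure P] (hPcube : P (cube d) = 1)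
    (hPB : ∀ s : Set (Eu d), MeasurableSet s →
      P s ≤ ENNReal.ofReal B * volume s)
    {Ω : Type*} [MeasurableSpace Ω] (μ : Measure Ω) [IsProbabilityMeasure μ]
    (X : ℕ → Ω → Eu d) (hmeas : ∀ n, Measurable (X n))
    (hindep : iIndepFun X μ)
    (hlaw : ∀ n, Measure.map (X n) μ = P)
    (β : ℕ → ℝ) (hβpos : ∀ n, 0 < β n) (hβ : Tendsto β atTop atTop)
    (N : Set (ι → Eu d)) (hN : IsOpen N)
    (hsub : {x ∈ (sep δ : Set (ι → Eu d)) |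
        ∀ y ∈ (sep δ : Set (ι → Eu d)), extVar Λ P x ≤ extVar Λ P y} ⊆ N) :
    ∀ᵐ ϖ ∂μ, ∃ n₀ : ℕ, ∀ n ≥ n₀,
      {x ∈ (sep δ : Set (ι → Eu d)) |
        empVar Λ X n ϖ x <
          (⨅ y : (sep δ : Set (ι → Eu d)), empVar Λ X n ϖ y.1) + 1 / β n}
        ⊆ N :=
  stmt15_general Λ hΛmem δ B hδ P hPcube hPB μ X hmeas hindep hlaw β hβ N hN hsub
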